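/- arXiv:2411.01614 — 2 statements merged into one kernel-verified Lean document; each statement's English description precedes it below -/
import Mathlib

section
/- Let N ≥ 1 and 0 < α ≤ 1/N, and let u₁, ..., u_N be positive functions on intervals I₁, ..., I_N ⊆ ℝ such that each u_i^(N·α) is concave on I_i. Then the function u(x₁,...,x_N) := ∏ᵢ uᵢ(xᵢ) satisfies that u^α is concave on the box I₁ × ⋯ × I_N. -/
open Finset Real

/-- Superadditivity of the geometric mean. -/
lemma geom_mean_superadd (N : ℕ) (hN : 1 ≤ N) (p q : Fin N → ℝ)
    (hp : ∀ i, 0 ≤ p i) (hq : ∀ i, 0 ≤ q i) :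
    (∏ i, p i ^ ((N : ℝ)⁻¹)) + (∏ i, q i ^ ((N : ℝ)⁻¹)) ≤
      ∏ i, (p i + q i) ^ ((N : ℝ)⁻¹) := by
  have hNpos : (0 : ℝ) < N := by exact_mod_cast hN
  have hNne : (N : ℝ) ≠ 0 := ne_of_gt hNpos
  by_cases hz : ∃ i, p i + q i = 0
  · obtain ⟨i, hi⟩ := hz
    have hpi : p i = 0 := le_antisymm (by nlinarith [hp i, hq i]) (hp i)
    have hqi : q i = 0 := le_antisymm (by nlinarith [hp i, hq i]) (hq i)
    have h1 : ∏ j, p j ^ ((N : ℝ)⁻¹) = 0 := by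
      apply Finset.prod_eq_zero (Finset.mem_univ i)
      rw [hpi, Real.zero_rpow (inv_ne_zero hNne)]
    have h2 : ∏ j, q j ^ ((N : ℝ)⁻¹) = 0 := by
      apply Finset.prod_eq_zero (Finset.mem_univ i)
      rw [hqi, Real.zero_rpow (inv_ne_zero hNne)]
    rw [h1, h2, add_zero]
    exact Finset.prod_nonneg fun j _ => Real.rpow_nonneg (by have := hp j; have := hq j; positivity) _
  · push_neg at hz
    have hs : ∀ i, 0 < p i + q i := fun i =>
      lt_of_le_of_ne (add_nonneg (hp i) (hq i)) (Ne.symm (hz i))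
    have hw : ∑ _i : Fin N, (N : ℝ)⁻¹ = 1 := by
      simp [Finset.card_univ, hNne]
    have hgp := Real.geom_mean_le_arith_mean_weighted Finset.univ
      (fun _ => (N : ℝ)⁻¹) (fun i => p i / (p i + q i))
      (fun i _ => inv_nonneg.2 hNpos.le) hw (fun i _ => div_nonneg (hp i) (hs i).le)
    have hgq := Real.geom_mean_le_arith_mean_weighted Finset.univ
      (fun _ => (N : ℝ)⁻¹) (fun i => q i / (p i + q i))
      (fun i _ => inv_nonneg.2 hNpos.le) hw (fun i _ => div_nonneg (hq i) (hs i).le)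
    have hsum : (∑ i, (N : ℝ)⁻¹ * (p i / (p i + q i))) +
        (∑ i, (N : ℝ)⁻¹ * (q i / (p i + q i))) = 1 := by
      rw [← Finset.sum_add_distrib, ← hw]
      refine Finset.sum_congr rfl fun i _ => ?_
      rw [← mul_add, ← add_div, div_self (ne_of_gt (hs i)), mul_one]
    have hS : 0 < ∏ i, (p i + q i) ^ ((N : ℝ)⁻¹) :=
      Finset.prod_pos fun i _ => Real.rpow_pos_of_pos (hs i) _
    have hdivp : ∏ i, (p i / (p i + q i)) ^ ((N : ℝ)⁻¹) =
        (∏ i, p i ^ ((N : ℝ)⁻¹)) / ∏ i, (p i + q i) ^ ((N : ℝ)⁻¹) := by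
      rw [← Finset.prod_div_distrib]
      exact Finset.prod_congr rfl fun i _ => Real.div_rpow (hp i) (hs i).le _
    have hdivq : ∏ i, (q i / (p i + q i)) ^ ((N : ℝ)⁻¹) =
        (∏ i, q i ^ ((N : ℝ)⁻¹)) / ∏ i, (p i + q i) ^ ((N : ℝ)⁻¹) := by
      rw [← Finset.prod_div_distrib]
      exact Finset.prod_congr rfl fun i _ => Real.div_rpow (hq i) (hs i).le _
    rw [hdivp] at hgp
    rw [hdivq] at hgq
    have := add_le_add hgp hgq
    rw [hsum, ← add_div, div_le_one hS] at this
    exact this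

theorem stmt_8 (N : ℕ) (hN : 1 ≤ N) (α : ℝ) (hα : 0 < α) (hα' : α ≤ 1 / N)
    (I : Fin N → Set ℝ) (hI : ∀ i, Convex ℝ (I i))
    (u : Fin N → ℝ → ℝ) (hpos : ∀ i, ∀ t ∈ I i, 0 < u i t)
    (hconc : ∀ i, ConcaveOn ℝ (I i) (fun t => u i t ^ ((N : ℝ) * α))) :
    ConcaveOn ℝ {x : Fin N → ℝ | ∀ i, x i ∈ I i}
      (fun x => (∏ i, u i (x i)) ^ α) := by
  have hNpos : (0 : ℝ) < N := by exact_mod_cast hN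
  have hNne : (N : ℝ) ≠ 0 := ne_of_gt hNpos
  set f : Fin N → ℝ → ℝ := fun i t => u i t ^ ((N : ℝ) * α) with hf
  -- key: rewrite (∏ u i (z i))^α = ∏ (f i (z i))^(1/N) for z in the box
  have key : ∀ z : (Fin N → ℝ), (∀ i, z i ∈ I i) →
      (∏ i, u i (z i)) ^ α = ∏ i, f i (z i) ^ ((N : ℝ)⁻¹) := by
    intro z hz
    rw [← Real.finset_prod_rpow _ _ (fun i _ => (hpos i _ (hz i)).le)]
    refine Finset.prod_congr rfl fun i _ => ?_
    show u i (z i) ^ α = (u i (z i) ^ ((N:ℝ) * α)) ^ ((N:ℝ)⁻¹)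
    rw [← Real.rpow_mul (hpos i _ (hz i)).le]
    congr 1
    field_simp
  constructor
  · have : {x : Fin N → ℝ | ∀ i, x i ∈ I i} = Set.pi Set.univ I := by
      ext x; simp [Set.mem_pi]
    rw [this]
    exact convex_pi fun i _ => hI i
  · intro x hx y hy a b ha hb hab
    simp only [Set.mem_setOf_eq] at hx hy
    have hz : ∀ i, (a • x + b • y) i ∈ I i := fun i =>
      (hI i) (hx i) (hy i) ha hb hab
    dsimp only
    rw [key x hx, key y hy, key _ hz]
    have step1 : ∀ i, a * f i (x i) + b * f i (y i) ≤ f i ((a • x + b • y) i) := by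
      intro i
      have := (hconc i).2 (hx i) (hy i) ha hb hab
      simpa [hf, smul_eq_mul] using this
    calc a • ∏ i, f i (x i) ^ ((N : ℝ)⁻¹) + b • ∏ i, f i (y i) ^ ((N : ℝ)⁻¹)
        = (∏ i, (a * f i (x i)) ^ ((N : ℝ)⁻¹)) +
          (∏ i, (b * f i (y i)) ^ ((N : ℝ)⁻¹)) := by
          have hpa : ∀ (c : ℝ), 0 ≤ c → ∀ w : Fin N → ℝ, (∀ i, 0 ≤ w i) →
              (∏ i, (c * w i) ^ ((N : ℝ)⁻¹)) = c * ∏ i, w i ^ ((N : ℝ)⁻¹) := by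
            intro c hc w hwn
            have : (∏ i : Fin N, (c * w i) ^ ((N : ℝ)⁻¹)) =
                ∏ i : Fin N, c ^ ((N:ℝ)⁻¹) * w i ^ ((N : ℝ)⁻¹) :=
              Finset.prod_congr rfl fun i _ => Real.mul_rpow hc (hwn i)
            rw [this, Finset.prod_mul_distrib, Finset.prod_const, Finset.card_univ,
              Fintype.card_fin, ← Real.rpow_natCast (c ^ ((N:ℝ)⁻¹)) N,
              ← Real.rpow_mul hc, inv_mul_cancel₀ hNne, Real.rpow_one]
          rw [hpa a ha (fun i => f i (x i))
              (fun i => Real.rpow_nonneg (hpos i _ (hx i)).le _),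
            hpa b hb (fun i => f i (y i))
              (fun i => Real.rpow_nonneg (hpos i _ (hy i)).le _)]
          simp [smul_eq_mul]
      _ ≤ ∏ i, (a * f i (x i) + b * f i (y i)) ^ ((N : ℝ)⁻¹) :=
          geom_mean_superadd N hN _ _
            (fun i => by have := Real.rpow_nonneg (hpos i _ (hx i)).le ((N:ℝ)*α); positivity)
            (fun i => by have := Real.rpow_nonneg (hpos i _ (hy i)).le ((N:ℝ)*α); positivity)
      _ ≤ ∏ i, f i ((a • x + b • y) i) ^ ((N : ℝ)⁻¹) := by
          refine Finset.prod_le_prod (fun i _ => Real.rpow_nonneg ?_ _)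
            (fun i _ => Real.rpow_le_rpow ?_ (step1 i) (by positivity))
          · have := Real.rpow_nonneg (hpos i _ (hx i)).le ((N:ℝ)*α)
            have := Real.rpow_nonneg (hpos i _ (hy i)).le ((N:ℝ)*α)
            positivity
          · have := Real.rpow_nonneg (hpos i _ (hx i)).le ((N:ℝ)*α)
            have := Real.rpow_nonneg (hpos i _ (hy i)).le ((N:ℝ)*α)
            positivity
end

section
/- Let Ω ⊆ ℝ^N be open and u : Ω → ℝ a C² function whose set of global minimizers, Argmin(u), is nonempty and compactly contained in Ω. Then for every open neighbourhood U of Argmin(u) with compact closure contained in Ω, there exists a point x̄ ∈ U and δ > 0 such that the Hessian D²u(x̄) satisfies D²u(x̄) ≥ 2δ·Id (in particular D²u(x̄) is positive definite). -/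
open Filter Topology Set


lemma aux_1d {g G : ℝ → ℝ} {c : ℝ}
    (hg : ∀ᶠ t in 𝓝 (0:ℝ), HasDerivAt g (G t) t)
    (hG : HasDerivAt G c 0)
    (hmin : ∀ᶠ t in 𝓝 (0:ℝ), g 0 ≤ g t) : 0 ≤ c := by
  by_contra hc
  push_neg at hc
  have hG0 : G 0 = 0 := by
    have hloc : IsLocalMin g 0 := hmin
    exact hloc.hasDerivAt_eq_zero hg.self_of_nhds
  have hslope := hasDerivAt_iff_tendsto_slope.1 hG
  have hneg : ∀ᶠ t in 𝓝[>] (0:ℝ), G t < 0 := by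
    have h1 : ∀ᶠ t in 𝓝[≠] (0:ℝ), slope G 0 t < 0 := hslope.eventually_lt_const hc
    have h2 : ∀ᶠ t in 𝓝[>] (0:ℝ), slope G 0 t < 0 :=
      h1.filter_mono (nhdsWithin_mono _ (fun t ht => ne_of_gt ht))
    filter_upwards [h2, self_mem_nhdsWithin] with t ht ht0
    have : G t / t < 0 := by simpa [slope_def_field, hG0] using ht
    have ht0' : (0:ℝ) < t := ht0
    rcases div_neg_iff.1 this with h | h
    · linarith [h.2]
    · exact h.1
  have hall : ∀ᶠ t in 𝓝[>] (0:ℝ),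
      HasDerivAt g (G t) t ∧ G t < 0 ∧ g 0 ≤ g t := by
    refine ((hg.filter_mono nhdsWithin_le_nhds).and (hneg.and
      (hmin.filter_mono nhdsWithin_le_nhds)))
  obtain ⟨ε, hε, hIoo⟩ := (nhdsGT_basis (0:ℝ)).eventually_iff.mp hall
  set t₀ := ε / 2 with ht₀
  have ht₀pos : 0 < t₀ := by positivity
  have ht₀mem : t₀ ∈ Ioo (0:ℝ) ε := ⟨ht₀pos, by simp [ht₀]; linarith⟩
  have hprop : ∀ t ∈ Ioo (0:ℝ) ε, HasDerivAt g (G t) t ∧ G t < 0 ∧ g 0 ≤ g t := hIoo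
  have hanti : StrictAntiOn g (Icc 0 t₀) := by
    apply strictAntiOn_of_deriv_neg (convex_Icc 0 t₀)
    · intro t ht
      rcases eq_or_lt_of_le ht.1 with h | h
      · exact ((h ▸ hg.self_of_nhds).continuousAt).continuousWithinAt
      · exact ((hprop t ⟨h, lt_of_le_of_lt ht.2 (by simp [ht₀]; linarith)⟩).1.continuousAt).continuousWithinAt
    · intro t ht
      rw [interior_Icc] at ht
      have h := hprop t ⟨ht.1, ht.2.trans (by simp [ht₀]; linarith)⟩
      rw [h.1.deriv]
      exact h.2.1
  have h1 : g t₀ < g 0 := hanti (left_mem_Icc.2 ht₀pos.le) (right_mem_Icc.2 ht₀pos.le) ht₀pos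
  have h2 : g 0 ≤ g t₀ := (hprop t₀ ht₀mem).2.2
  linarith

lemma aux_second {E : Type*} [NormedAddCommGroup E] [NormedSpace ℝ E]
    {Ω : Set E} (hΩ : IsOpen Ω) {u : E → ℝ} (hu : ContDiffOn ℝ 2 u Ω)
    {x : E} (hx : x ∈ Ω) (ξ : E) :
    (∀ᶠ t in 𝓝 (0:ℝ), HasDerivAt (fun s => u (x + s • ξ)) (fderiv ℝ u (x + t • ξ) ξ) t) ∧
    HasDerivAt (fun t : ℝ => fderiv ℝ u (x + t • ξ) ξ) (iteratedFDeriv ℝ 2 u x ![ξ, ξ]) 0 := by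
  have hline : ∀ t : ℝ, HasDerivAt (fun s : ℝ => x + s • ξ) ξ t := by
    intro t
    simpa using ((hasDerivAt_id t).smul_const ξ).const_add x
  have hmem : ∀ᶠ t in 𝓝 (0:ℝ), x + t • ξ ∈ Ω := by
    have hc : ContinuousAt (fun t : ℝ => x + t • ξ) 0 := (hline 0).continuousAt
    have h0 : x + (0:ℝ) • ξ ∈ Ω := by simpa using hx
    exact hc.eventually_mem (hΩ.mem_nhds h0)
  constructor
  · filter_upwards [hmem] with t ht
    have hd : DifferentiableAt ℝ u (x + t • ξ) :=
      (hu.contDiffAt (hΩ.mem_nhds ht)).differentiableAt (by norm_num)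
    exact hd.hasFDerivAt.comp_hasDerivAt t (hline t)
  · have hcd : ContDiffAt ℝ 2 u x := hu.contDiffAt (hΩ.mem_nhds hx)
    have hF : ContDiffAt ℝ 1 (fderiv ℝ u) x := hcd.fderiv_right (by norm_num)
    have hFd : DifferentiableAt ℝ (fderiv ℝ u) x := hF.differentiableAt (by norm_num)
    have h0 : x + (0:ℝ) • ξ = x := by simp
    have h1 : HasDerivAt (fun t : ℝ => fderiv ℝ u (x + t • ξ))
        (fderiv ℝ (fderiv ℝ u) x ξ) 0 := by
      have hFd' : HasFDerivAt (fderiv ℝ u) (fderiv ℝ (fderiv ℝ u) x) (x + (0:ℝ) • ξ) := by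
        rw [h0]; exact hFd.hasFDerivAt
      exact hFd'.comp_hasDerivAt 0 (hline 0)
    have h2 := ((ContinuousLinearMap.apply ℝ ℝ ξ).hasFDerivAt).comp_hasDerivAt 0 h1
    have h3 : iteratedFDeriv ℝ 2 u x ![ξ, ξ] = fderiv ℝ (fderiv ℝ u) x ξ ξ := by
      rw [iteratedFDeriv_two_apply]
      simp
    rw [h3]
    exact h2

theorem stmt_17 {N : ℕ} (Ω : Set (EuclideanSpace ℝ (Fin N))) (hΩ : IsOpen Ω)
    (u : EuclideanSpace ℝ (Fin N) → ℝ) (hu : ContDiffOn ℝ 2 u Ω)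
    (A : Set (EuclideanSpace ℝ (Fin N)))
    (hA : A = {x ∈ Ω | ∀ y ∈ Ω, u x ≤ u y})
    (hne : A.Nonempty) (hcpt : IsCompact (closure A)) (hsub : closure A ⊆ Ω)
    (U : Set (EuclideanSpace ℝ (Fin N))) (hUo : IsOpen U) (hAU : A ⊆ U)
    (hUc : IsCompact (closure U)) (hUΩ : closure U ⊆ Ω) :
    ∃ x ∈ U, ∃ δ : ℝ, 0 < δ ∧
      ∀ ξ : EuclideanSpace ℝ (Fin N), 2 * δ * ‖ξ‖ ^ 2 ≤ iteratedFDeriv ℝ 2 u x ![ξ, ξ] := by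
  obtain ⟨a, haA⟩ := hne
  have haΩ : a ∈ Ω := by rw [hA] at haA; exact haA.1
  have hamin : ∀ y ∈ Ω, u a ≤ u y := by rw [hA] at haA; exact haA.2
  have haU : a ∈ U := hAU haA
  set K := closure U \ U with hK
  have hKc : IsCompact K := hUc.diff hUo
  have hKΩ : K ⊆ Ω := (diff_subset).trans hUΩ
  -- choose δ
  obtain ⟨δ, hδ, hbd⟩ : ∃ δ : ℝ, 0 < δ ∧
      ∀ y ∈ K, u a - δ * ‖a‖ ^ 2 < u y - δ * ‖y‖ ^ 2 := by
    rcases K.eq_empty_or_nonempty with hKe | hKn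
    · exact ⟨1, one_pos, by simp [hKe]⟩
    · obtain ⟨y₀, hy₀K, hy₀min⟩ :=
        hKc.exists_isMinOn hKn ((hu.continuousOn).mono hKΩ)
      rw [isMinOn_iff] at hy₀min
      have hy₀Ω : y₀ ∈ Ω := hKΩ hy₀K
      have hlt : u a < u y₀ := by
        rcases lt_or_eq_of_le (hamin y₀ hy₀Ω) with h | h
        · exact h
        · exfalso
          have : y₀ ∈ A := by
            rw [hA]
            exact ⟨hy₀Ω, fun y hy => h ▸ hamin y hy⟩
          exact hy₀K.2 (hAU this)
      obtain ⟨R, hR⟩ := isBounded_iff_forall_norm_le.1 hUc.isBounded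
      have hR0 : 0 ≤ R := le_trans (norm_nonneg a) (hR a (subset_closure haU))
      refine ⟨(u y₀ - u a) / (2 * (R ^ 2 + 1)), div_pos (sub_pos.2 hlt) (by positivity), ?_⟩
      intro y hyK
      have hyU : u y₀ ≤ u y := hy₀min y hyK
      have hyR : ‖y‖ ^ 2 ≤ R ^ 2 := by
        have := hR y hyK.1
        nlinarith [norm_nonneg y]
      set δ := (u y₀ - u a) / (2 * (R ^ 2 + 1)) with hδdef
      have hδpos : 0 < δ := div_pos (sub_pos.2 hlt) (by positivity)
      have hkey : δ * (2 * (R ^ 2 + 1)) = u y₀ - u a := by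
        rw [hδdef]; field_simp
      nlinarith [mul_le_mul_of_nonneg_left hyR hδpos.le,
        mul_nonneg hδpos.le (sq_nonneg ‖a‖)]
  -- minimize v over closure U
  set v : EuclideanSpace ℝ (Fin N) → ℝ := fun y => u y - δ * ‖y‖ ^ 2 with hv
  have hvc : ContinuousOn v (closure U) :=
    (hu.continuousOn.mono hUΩ).sub
      ((continuous_const.mul (continuous_norm.pow 2)).continuousOn)
  obtain ⟨xb, hxbcl, hxbmin⟩ := hUc.exists_isMinOn ⟨a, subset_closure haU⟩ hvc
  rw [isMinOn_iff] at hxbmin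
  have hxbU : xb ∈ U := by
    by_contra h
    have hxbK : xb ∈ K := ⟨hxbcl, h⟩
    have h1 := hbd xb hxbK
    have h2 := hxbmin a (subset_closure haU)
    simp only [hv] at h2
    linarith
  have hxbΩ : xb ∈ Ω := hUΩ hxbcl
  refine ⟨xb, hxbU, δ, hδ, ?_⟩
  intro ξ
  obtain ⟨hgd, hGd⟩ := aux_second hΩ hu hxbΩ ξ
  -- local minimality along the line
  have hline : ∀ t : ℝ, HasDerivAt (fun s : ℝ => xb + s • ξ) ξ t := by
    intro t; simpa using ((hasDerivAt_id t).smul_const ξ).const_add xb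
  have hloc : ∀ᶠ t in 𝓝 (0:ℝ), v xb ≤ v (xb + t • ξ) := by
    have hc : ContinuousAt (fun t : ℝ => xb + t • ξ) 0 := (hline 0).continuousAt
    have h0 : xb + (0:ℝ) • ξ ∈ U := by simpa using hxbU
    filter_upwards [hc.eventually_mem (hUo.mem_nhds h0)] with t ht
    exact hxbmin _ (subset_closure ht)
  -- quadratic expansion
  have hq : ∀ y : EuclideanSpace ℝ (Fin N), ∀ t : ℝ,
      ‖y + t • ξ‖ ^ 2 = ‖y‖ ^ 2 + 2 * (inner ℝ y ξ : ℝ) * t + ‖ξ‖ ^ 2 * t ^ 2 := by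
    intro y t
    rw [norm_add_sq_real, real_inner_smul_right, norm_smul, Real.norm_eq_abs,
      mul_pow, sq_abs]
    ring
  set G : ℝ → ℝ :=
    fun t => fderiv ℝ u (xb + t • ξ) ξ - δ * (2 * (inner ℝ xb ξ : ℝ) + 2 * ‖ξ‖ ^ 2 * t)
    with hG
  have hgG : ∀ᶠ t in 𝓝 (0:ℝ), HasDerivAt (fun s => v (xb + s • ξ)) (G t) t := by
    filter_upwards [hgd] with t ht
    have hsq : HasDerivAt (fun s : ℝ => s ^ 2) (2 * t) t := by
      simpa using hasDerivAt_pow 2 t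
    have hpoly : HasDerivAt
        (fun s : ℝ => δ * (‖xb‖ ^ 2 + 2 * (inner ℝ xb ξ : ℝ) * s + ‖ξ‖ ^ 2 * s ^ 2))
        (δ * (2 * (inner ℝ xb ξ : ℝ) + 2 * ‖ξ‖ ^ 2 * t)) t := by
      have h1 : HasDerivAt
          (fun s : ℝ => ‖xb‖ ^ 2 + 2 * (inner ℝ xb ξ : ℝ) * s + ‖ξ‖ ^ 2 * s ^ 2)
          (2 * (inner ℝ xb ξ : ℝ) + 2 * ‖ξ‖ ^ 2 * t) t := by
        have h2 := ((hasDerivAt_id t).const_mul (2 * (inner ℝ xb ξ : ℝ))).const_add (‖xb‖ ^ 2)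
        have h3 := hsq.const_mul (‖ξ‖ ^ 2)
        have := h2.add h3
        refine this.congr_deriv ?_
        ring
      exact h1.const_mul δ
    have heq : (fun s => v (xb + s • ξ)) =
        fun s : ℝ => u (xb + s • ξ) -
          δ * (‖xb‖ ^ 2 + 2 * (inner ℝ xb ξ : ℝ) * s + ‖ξ‖ ^ 2 * s ^ 2) := by
      funext s
      simp only [hv, hq xb s]
    rw [heq, hG]
    exact ht.sub hpoly
  have hGderiv : HasDerivAt G (iteratedFDeriv ℝ 2 u xb ![ξ, ξ] - 2 * δ * ‖ξ‖ ^ 2) 0 := by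
    have hlin : HasDerivAt
        (fun t : ℝ => δ * (2 * (inner ℝ xb ξ : ℝ) + 2 * ‖ξ‖ ^ 2 * t))
        (2 * δ * ‖ξ‖ ^ 2) 0 := by
      have h1 := ((hasDerivAt_id (0:ℝ)).const_mul (2 * ‖ξ‖ ^ 2)).const_add
        (2 * (inner ℝ xb ξ : ℝ))
      have := h1.const_mul δ
      refine this.congr_deriv ?_
      ring
    exact hGd.sub hlin
  have hfin : 0 ≤ iteratedFDeriv ℝ 2 u xb ![ξ, ξ] - 2 * δ * ‖ξ‖ ^ 2 := by
    refine aux_1d hgG hGderiv ?_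
    have h00 : xb + (0:ℝ) • ξ = xb := by simp
    filter_upwards [hloc] with t ht
    simpa [h00] using ht
  linarith
end
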